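/- arXiv:2210.03000 — 4 statements merged into one kernel-verified Lean document; each statement's English description precedes it below -/
import Mathlib

section
/- Let f: (M,g;D_1,...,D_k) → (M̄,ḡ) be an isometric immersion of a Riemannian almost k-product manifold (k ≥ 2, TM = D_1 ⊕ ... ⊕ D_k orthogonally, dim D_i = n_i) into a Riemannian manifold. Then at every point S_mix(D_1,...,D_k) ≤ ((k−1)/(2k))·‖H̄‖² + δ̄_mix(n_1,...,n_k), where H̄ is the mean curvature vector of f and δ̄_mix(n_1,...,n_k) = sup{S̄_mix(V_1,...,V_k) : V_i pairwise orthogonal subspaces of tangent spaces of M̄, dim V_i = n_i}. Equality holds if and only if f is mixed totally geodesic (h̄(X,Y)=0 for X ∈ D_i, Y ∈ D_j, i≠j), the partial mean curvature vectors satisfy H̄_1 = ... = H̄_k, and S̄_mix(D_1(x),...,D_k(x)) = δ̄_mix(n_1,...,n_k) at each point x of M. -/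
open Finset
open scoped RealInnerProductSpace

lemma pair_split {k : ℕ} (g : Fin k → Fin k → ℝ) (hg : ∀ i j, g i j = g j i) :
    ∑ i, ∑ j, g i j =
      (∑ i, g i i) + 2 * ∑ i, ∑ j ∈ univ.filter (fun j => i < j), g i j := by
  have hfil : ∀ i : Fin k, univ.filter (fun j => ¬ i < j) =
      insert i (univ.filter (fun j => j < i)) := by
    intro i
    ext j
    simp only [mem_filter, mem_univ, true_and, mem_insert, not_lt, Fin.ext_iff, Fin.lt_def,
      Fin.le_def]
    omega
  have h1 : ∀ i : Fin k, ∑ j, g i j =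
      (∑ j ∈ univ.filter (fun j => i < j), g i j) +
        (g i i + ∑ j ∈ univ.filter (fun j => j < i), g i j) := by
    intro i
    rw [← Finset.sum_filter_add_sum_filter_not univ (fun j => i < j) (g i), hfil i,
      Finset.sum_insert (by simp)]
  have hswap : ∑ i, ∑ j ∈ univ.filter (fun j => j < i), g i j =
      ∑ i, ∑ j ∈ univ.filter (fun j => i < j), g i j := by
    rw [Finset.sum_comm' (t' := univ) (s' := fun j => univ.filter (fun i => j < i))
      (by intro x y; simp)]
    exact Finset.sum_congr rfl fun j _ => Finset.sum_congr rfl fun i _ => hg i j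
  simp_rw [h1]
  rw [Finset.sum_add_distrib, Finset.sum_add_distrib, hswap]
  ring

lemma sum_sub_centroid {E : Type*} [NormedAddCommGroup E] [InnerProductSpace ℝ E]
    {k : ℕ} (hk : (k : ℝ) ≠ 0) (v : Fin k → E) :
    ∑ i, ⟪v i - (k:ℝ)⁻¹ • (∑ j, v j), v i - (k:ℝ)⁻¹ • (∑ j, v j)⟫ =
      (∑ i, ⟪v i, v i⟫) - (k:ℝ)⁻¹ * ⟪∑ j, v j, ∑ j, v j⟫ := by
  set S : E := ∑ j, v j with hS
  have expand : ∀ i : Fin k, ⟪v i - (k:ℝ)⁻¹ • S, v i - (k:ℝ)⁻¹ • S⟫ =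
      ⟪v i, v i⟫ - 2 * ((k:ℝ)⁻¹ * ⟪v i, S⟫) + (k:ℝ)⁻¹ * ((k:ℝ)⁻¹ * ⟪S, S⟫) := by
    intro i
    simp only [real_inner_sub_sub_self, real_inner_smul_left, real_inner_smul_right,
      RCLike.conj_to_real, conj_trivial]
    try ring
  simp_rw [expand]
  rw [Finset.sum_add_distrib, Finset.sum_sub_distrib, Finset.sum_const]
  have hin : ∑ x : Fin k, 2 * ((k:ℝ)⁻¹ * ⟪v x, S⟫) = 2 * ((k:ℝ)⁻¹ * ⟪S, S⟫) := by
    rw [← Finset.mul_sum, ← Finset.mul_sum, ← sum_inner]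
  rw [hin]
  simp only [card_univ, Fintype.card_fin, nsmul_eq_mul]
  field_simp
  ring

/-- Main theorem (pointwise form). Let `e : Fin n → E` be an adapted orthonormal tangent
frame at a point of an almost `k`-product manifold `M` isometrically immersed in `M̄`
(with ambient tangent space `E`), `p` the assignment of frame vectors to the distributions
`D_1, …, D_k`, `h` the (symmetric, normal-valued) second fundamental form on the frame,
`K` the intrinsic sectional curvatures obtained from the ambient curvature `R̄` via the
Gauss equation, `H̄ = ∑ h(e_a,e_a)` the mean curvature vector, `H̄_i` the partial mean
curvature vectors, and `δ = δ̄_mix(n_1,…,n_k)` an upper bound of the ambient mixed scalar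
curvature over all adapted orthonormal families. Then
`S_mix(D_1,…,D_k) ≤ ((k−1)/(2k)) ‖H̄‖² + δ̄_mix`, with equality iff the immersion is mixed
totally geodesic, `H̄_1 = … = H̄_k`, and `S̄_mix(D_1,…,D_k) = δ̄_mix` at the point. -/
theorem stmt_6 {E : Type*} [NormedAddCommGroup E] [InnerProductSpace ℝ E]
    (n k : ℕ) (hk : 2 ≤ k)
    (e : Fin n → E) (he : Orthonormal ℝ e)
    (p : Fin n → Fin k) (hp : Function.Surjective p)
    (Rbar : E → E → E → E → ℝ)
    (h : Fin n → Fin n → E)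
    (hsym : ∀ a b, h a b = h b a)
    (hnor : ∀ a b c, ⟪h a b, e c⟫ = 0)
    (K : Fin n → Fin n → ℝ)
    (hK : ∀ a b, K a b = Rbar (e a) (e b) (e b) (e a) + ⟪h a a, h b b⟫ - ⟪h a b, h a b⟫)
    (Smix : ℝ)
    (hSmix : Smix = ∑ i : Fin k, ∑ j ∈ univ.filter (fun j => i < j),
        ∑ a ∈ univ.filter (fun a => p a = i), ∑ b ∈ univ.filter (fun b => p b = j), K a b)
    (SmixBar : (Fin n → E) → ℝ)
    (hSB : ∀ f : Fin n → E, SmixBar f = ∑ i : Fin k, ∑ j ∈ univ.filter (fun j => i < j),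
        ∑ a ∈ univ.filter (fun a => p a = i), ∑ b ∈ univ.filter (fun b => p b = j),
          Rbar (f a) (f b) (f b) (f a))
    (δ : ℝ)
    (hδ : ∀ f : Fin n → E, Orthonormal ℝ f → SmixBar f ≤ δ)
    (H : E) (hH : H = ∑ a : Fin n, h a a)
    (Hp : Fin k → E)
    (hHp : ∀ i, Hp i = ∑ a ∈ univ.filter (fun a => p a = i), h a a) :
    Smix ≤ (k - 1 : ℝ) / (2 * k) * ‖H‖ ^ 2 + δ ∧
    (Smix = (k - 1 : ℝ) / (2 * k) * ‖H‖ ^ 2 + δ ↔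
      ((∀ a b, p a ≠ p b → h a b = 0) ∧ (∀ i j, Hp i = Hp j) ∧ SmixBar e = δ)) := by
  have hkR : (k : ℝ) ≠ 0 := Nat.cast_ne_zero.mpr (by omega)
  set P : ℝ := ∑ i : Fin k, ∑ j ∈ univ.filter (fun j => i < j), ⟪Hp i, Hp j⟫ with hP
  set Q : ℝ := ∑ i : Fin k, ∑ j ∈ univ.filter (fun j => i < j),
      ∑ a ∈ univ.filter (fun a => p a = i), ∑ b ∈ univ.filter (fun b => p b = j),
        ⟪h a b, h a b⟫ with hQ
  set Sd : ℝ := ∑ i : Fin k, ⟪Hp i, Hp i⟫ with hSd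
  -- inner mixed sums equal inner products of partial mean curvatures
  have hinner : ∀ i j : Fin k,
      (∑ a ∈ univ.filter (fun a => p a = i), ∑ b ∈ univ.filter (fun b => p b = j),
        ⟪h a a, h b b⟫) = ⟪Hp i, Hp j⟫ := by
    intro i j
    rw [hHp i, hHp j, sum_inner]
    exact Finset.sum_congr rfl fun a _ => (inner_sum _ _ _).symm
  -- Step A : Smix = SmixBar e + P - Q
  have step : ∀ i j : Fin k,
      (∑ a ∈ univ.filter (fun a => p a = i), ∑ b ∈ univ.filter (fun b => p b = j), K a b)
        = (∑ a ∈ univ.filter (fun a => p a = i), ∑ b ∈ univ.filter (fun b => p b = j),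
            Rbar (e a) (e b) (e b) (e a)) + ⟪Hp i, Hp j⟫
          - (∑ a ∈ univ.filter (fun a => p a = i), ∑ b ∈ univ.filter (fun b => p b = j),
              ⟪h a b, h a b⟫) := by
    intro i j
    rw [← hinner i j]
    simp only [hK, Finset.sum_sub_distrib, Finset.sum_add_distrib]
  have hA : Smix = SmixBar e + P - Q := by
    rw [hSmix, hSB e, hP, hQ]
    simp only [step]
    simp only [Finset.sum_sub_distrib, Finset.sum_add_distrib]
  -- Step B : H is the sum of the partial mean curvatures
  have hHsum : H = ∑ i : Fin k, Hp i := by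
    rw [hH]
    simp_rw [hHp]
    exact (Finset.sum_fiberwise_of_maps_to (fun a _ => mem_univ (p a)) _).symm
  -- Step C : norm of H
  have hNorm : ⟪H, H⟫ = Sd + 2 * P := by
    rw [hHsum, sum_inner]
    simp_rw [inner_sum]
    exact pair_split _ (fun i j => real_inner_comm _ _)
  -- Step D : centered sum
  set c : E := (k:ℝ)⁻¹ • H with hc
  set T : ℝ := ∑ i : Fin k, ⟪Hp i - c, Hp i - c⟫ with hT0
  have hT : T = Sd - (k:ℝ)⁻¹ * ⟪H, H⟫ := by
    have := sum_sub_centroid hkR Hp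
    rw [← hHsum] at this
    exact this
  have hTnn : 0 ≤ T := Finset.sum_nonneg fun i _ => real_inner_self_nonneg
  have hQnn : 0 ≤ Q := by
    refine Finset.sum_nonneg fun i _ => Finset.sum_nonneg fun j _ =>
      Finset.sum_nonneg fun a _ => Finset.sum_nonneg fun b _ => real_inner_self_nonneg
  have hδA : SmixBar e ≤ δ := hδ e he
  have hH2 : ‖H‖ ^ 2 = ⟪H, H⟫ := (real_inner_self_eq_norm_sq H).symm
  have key : (k - 1 : ℝ) / (2 * k) * ‖H‖ ^ 2 + δ - Smix = (δ - SmixBar e) + T / 2 + Q := by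
    rw [hA, hH2, hT, hNorm]
    field_simp
    ring
  constructor
  · linarith
  constructor
  · -- equality implies the three conditions
    intro heq
    have hzero : (δ - SmixBar e) + T / 2 + Q = 0 := by linarith
    have hδ0 : δ - SmixBar e = 0 := by linarith
    have hT0' : T = 0 := by linarith
    have hQ0 : Q = 0 := by linarith
    refine ⟨?_, ?_, by linarith⟩
    · -- mixed totally geodesic
      rw [hQ] at hQ0
      have l1 := (Finset.sum_eq_zero_iff_of_nonneg (fun i _ => Finset.sum_nonneg fun j _ =>
        Finset.sum_nonneg fun a _ => Finset.sum_nonneg fun b _ =>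
          real_inner_self_nonneg)).mp hQ0
      have hmix : ∀ a b : Fin n, p a < p b → h a b = 0 := by
        intro a b hab
        have l2 := (Finset.sum_eq_zero_iff_of_nonneg (fun j _ =>
          Finset.sum_nonneg fun a' _ => Finset.sum_nonneg fun b' _ =>
            real_inner_self_nonneg)).mp (l1 (p a) (mem_univ _)) (p b)
          (by simp [hab])
        have l3 := (Finset.sum_eq_zero_iff_of_nonneg (fun a' _ =>
          Finset.sum_nonneg fun b' _ => real_inner_self_nonneg)).mp l2 a (by simp)
        have l4 := (Finset.sum_eq_zero_iff_of_nonneg (fun b' _ =>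
          real_inner_self_nonneg)).mp l3 b (by simp)
        exact inner_self_eq_zero.mp l4
      intro a b hab
      rcases lt_or_gt_of_ne hab with h1 | h1
      · exact hmix a b h1
      · rw [hsym]; exact hmix b a h1
    · -- partial mean curvatures all equal
      have hall : ∀ i : Fin k, Hp i = c := by
        intro i
        rw [hT0] at hT0'
        have := (Finset.sum_eq_zero_iff_of_nonneg (fun i _ =>
          real_inner_self_nonneg)).mp hT0' i (mem_univ _)
        exact sub_eq_zero.mp (inner_self_eq_zero.mp this)
      intro i j
      rw [hall i, hall j]
  · -- the three conditions imply equality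
    rintro ⟨hmix, heqHp, hAe⟩
    have hQ0 : Q = 0 := by
      rw [hQ]
      refine Finset.sum_eq_zero fun i _ => Finset.sum_eq_zero fun j hj =>
        Finset.sum_eq_zero fun a ha => Finset.sum_eq_zero fun b hb => ?_
      have hij : i < j := (mem_filter.mp hj).2
      have hpa : p a = i := (mem_filter.mp ha).2
      have hpb : p b = j := (mem_filter.mp hb).2
      have : h a b = 0 := hmix a b (by rw [hpa, hpb]; exact ne_of_lt hij)
      simp [this]
    have i0 : Fin k := ⟨0, by omega⟩
    have hallc : ∀ i : Fin k, Hp i = c := by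
      intro i
      have hsumeq : ∑ j : Fin k, Hp j = (k : ℕ) • Hp i := by
        rw [Finset.sum_congr rfl (fun j _ => heqHp j i), Finset.sum_const, card_univ,
          Fintype.card_fin]
      rw [hc, hHsum, hsumeq, ← Nat.cast_smul_eq_nsmul ℝ, smul_smul,
        inv_mul_cancel₀ hkR, one_smul]
    have hT0' : T = 0 := by
      rw [hT0]
      refine Finset.sum_eq_zero fun i _ => ?_
      rw [hallc i]
      simp
    linarith
end

section
/- Let f: (M,g) → (M̄,ḡ) be an isometric immersion of an n-dimensional Riemannian manifold. For any natural numbers n_1,...,n_k with Σ_i n_i = n, define δ_mix(n_1,...,n_k) at a point of M as the supremum of S_mix(V_1,...,V_k) over pairwise orthogonal subspaces V_i ⊂ T_xM with dim V_i = n_i (computed with the intrinsic curvature of M), and define δ̄_mix(n_1,...,n_k) analogously for M̄. Then δ_mix(n_1,...,n_k) ≤ ((k−1)/(2k))·‖H̄‖² + δ̄_mix(n_1,...,n_k). -/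
/-!
By the Gauss equation, the mixed scalar curvature of `M` on an adapted orthonormal frame equals
the ambient one, plus `∑_{i<j} ⟪H_i, H_j⟫`, minus the (nonnegative) squared norms of the mixed
components of the second fundamental form; here `H_i` is the trace of `h` over the `i`-th block,
so `∑ H_i = H̄` is independent of the frame. Since `‖∑ H_i‖² ≤ k ∑ ‖H_i‖²`, the middle term is at
most `(k - 1)/(2k) ‖H̄‖²`.
-/

open Finset
open scoped RealInnerProductSpace

theorem norm_sum_sq_le_card_mul_sum_norm_sq {ι E : Type*} [Fintype ι] [SeminormedAddCommGroup E]
    (v : ι → E) : ‖∑ i, v i‖ ^ 2 ≤ Fintype.card ι * ∑ i, ‖v i‖ ^ 2 :=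
  calc ‖∑ i, v i‖ ^ 2 ≤ (∑ i, ‖v i‖) ^ 2 := by gcongr; exact norm_sum_le _ _
    _ ≤ Fintype.card ι * ∑ i, ‖v i‖ ^ 2 := sq_sum_le_card_mul_sum_sq

section PairSums

variable {ι R : Type*} [Fintype ι] [LinearOrder ι]

theorem Finset.sum_sum_eq_sum_diag_add_two_mul_sum_lt [CommSemiring R] (x : ι → ι → R)
    (hx : ∀ i j, x i j = x j i) :
    ∑ i, ∑ j, x i j = ∑ i, x i i + 2 * ∑ i, ∑ j ∈ univ.filter (i < ·), x i j := by
  have split : ∀ i j, x i j = (if j = i then x i j else 0)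
      + (if i < j then x i j else 0) + (if j < i then x j i else 0) := by
    intro i j
    rcases lt_trichotomy i j with hij | rfl | hij
    · simp [hij, hij.ne', hij.not_gt]
    · simp
    · simp [hij, hij.ne, hij.not_gt, hx]
  simp_rw [fun i => Finset.sum_congr rfl fun j (_ : j ∈ univ) => split i j,
    Finset.sum_add_distrib, Finset.sum_ite_eq', if_pos (mem_univ _)]
  rw [Finset.sum_comm (f := fun i j => if j < i then x j i else 0)]
  simp only [Finset.sum_filter]
  ring

variable {E : Type*} [NormedAddCommGroup E] [InnerProductSpace ℝ E]

theorem two_mul_sum_inner_lt_eq (v : ι → E) :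
    2 * ∑ i, ∑ j ∈ univ.filter (i < ·), ⟪v i, v j⟫ = ‖∑ i, v i‖ ^ 2 - ∑ i, ‖v i‖ ^ 2 := by
  rw [← real_inner_self_eq_norm_sq, sum_inner]
  simp_rw [inner_sum]
  rw [Finset.sum_sum_eq_sum_diag_add_two_mul_sum_lt _ fun i j => real_inner_comm (v j) (v i)]
  simp_rw [real_inner_self_eq_norm_sq]
  ring

theorem sum_inner_lt_le_mul_norm_sum_sq (v : ι → E) :
    ∑ i, ∑ j ∈ univ.filter (i < ·), ⟪v i, v j⟫
      ≤ (Fintype.card ι - 1 : ℝ) / (2 * Fintype.card ι) * ‖∑ i, v i‖ ^ 2 := by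
  rcases isEmpty_or_nonempty ι with _ | _
  · simp
  have hcard : (0 : ℝ) < Fintype.card ι := by exact_mod_cast Fintype.card_pos
  have hpairs := two_mul_sum_inner_lt_eq v
  have hle := norm_sum_sq_le_card_mul_sum_norm_sq v
  rw [div_mul_eq_mul_div, le_div_iff₀ (by positivity)]
  nlinarith

end PairSums

theorem OrthonormalBasis.sum_apply_self_eq {ι ι' T E : Type*} [Fintype ι] [Fintype ι']
    [NormedAddCommGroup T] [InnerProductSpace ℝ T] [AddCommGroup E] [Module ℝ E]
    (B : T →ₗ[ℝ] T →ₗ[ℝ] E) (b : OrthonormalBasis ι ℝ T) (b' : OrthonormalBasis ι' ℝ T) :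
    ∑ i, B (b i) (b i) = ∑ j, B (b' j) (b' j) := by
  calc ∑ i, B (b i) (b i) = ∑ i, B (b i) (∑ j, ⟪b' j, b i⟫ • b' j) := by
        simp_rw [b'.sum_repr']
    _ = ∑ j, B (∑ i, ⟪b i, b' j⟫ • b i) (b' j) := by
        simp only [map_sum, map_smul, LinearMap.sum_apply, LinearMap.smul_apply, real_inner_comm]
        exact Finset.sum_comm
    _ = ∑ j, B (b' j) (b' j) := by simp_rw [b.sum_repr']

theorem Orthonormal.exists_orthonormalBasis_coe_eq {ι T : Type*} [Fintype ι]
    [NormedAddCommGroup T] [InnerProductSpace ℝ T] [FiniteDimensional ℝ T] {f : ι → T}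
    (hf : Orthonormal ℝ f) (hcard : Fintype.card ι = Module.finrank ℝ T) :
    ∃ b : OrthonormalBasis ι ℝ T, ⇑b = f :=
  ⟨.mk hf (hf.linearIndependent.span_eq_top_of_card_eq_finrank' hcard).ge, by simp⟩

section MixedSum

variable {ι κ : Type*} [Fintype ι] [Fintype κ] [LinearOrder κ] (p : ι → κ)

/-- `S_mix` of the blocks `p ⁻¹' {i}` of a frame `e`, when `F a c = K(e a, e c)`. -/
def mixedSum (F : ι → ι → ℝ) : ℝ :=
  ∑ i, ∑ j ∈ univ.filter (i < ·), ∑ a ∈ univ.filter (p · = i), ∑ c ∈ univ.filter (p · = j), F a c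

theorem mixedSum_add_sub (F G K : ι → ι → ℝ) :
    mixedSum p (fun a c => F a c + G a c - K a c)
      = mixedSum p F + mixedSum p G - mixedSum p K := by
  simp only [mixedSum, Finset.sum_sub_distrib, Finset.sum_add_distrib]

theorem mixedSum_nonneg {F : ι → ι → ℝ} (hF : ∀ a c, 0 ≤ F a c) : 0 ≤ mixedSum p F :=
  sum_nonneg fun _ _ => sum_nonneg fun _ _ => sum_nonneg fun _ _ => sum_nonneg fun _ _ => hF _ _

theorem mixedSum_inner {E : Type*} [NormedAddCommGroup E] [InnerProductSpace ℝ E] (u : ι → E) :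
    mixedSum p (fun a c => ⟪u a, u c⟫)
      = ∑ i, ∑ j ∈ univ.filter (i < ·),
          ⟪∑ a ∈ univ.filter (p · = i), u a, ∑ c ∈ univ.filter (p · = j), u c⟫ := by
  simp only [mixedSum, sum_inner]
  simp only [inner_sum]

end MixedSum

theorem stmt_9_general {T E : Type*} [NormedAddCommGroup T] [InnerProductSpace ℝ T]
    [NormedAddCommGroup E] [InnerProductSpace ℝ E] [FiniteDimensional ℝ T]
    (n k : ℕ) (hn : Module.finrank ℝ T = n)
    (J : T →ₗᵢ[ℝ] E)
    (h : T →ₗ[ℝ] T →ₗ[ℝ] E)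
    (hsym : ∀ X Y, h X Y = h Y X)
    (Rbar : E → E → E → E → ℝ)
    (R : T → T → T → T → ℝ)
    (hGauss : ∀ X Y Z W : T, R X Y Z W = Rbar (J X) (J Y) (J Z) (J W)
        + ⟪h X W, h Y Z⟫ - ⟪h X Z, h Y W⟫)
    (p : Fin n → Fin k)
    (b : OrthonormalBasis (Fin n) ℝ T)
    (H : E) (hH : H = ∑ a : Fin n, h (b a) (b a))
    (δbar : ℝ)
    (hδbar : ∀ g : Fin n → E, Orthonormal ℝ g →
      (∑ i : Fin k, ∑ j ∈ univ.filter (fun j => i < j),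
        ∑ a ∈ univ.filter (fun a => p a = i), ∑ c ∈ univ.filter (fun c => p c = j),
          Rbar (g a) (g c) (g c) (g a)) ≤ δbar) :
    ∀ f : Fin n → T, Orthonormal ℝ f →
      (∑ i : Fin k, ∑ j ∈ univ.filter (fun j => i < j),
        ∑ a ∈ univ.filter (fun a => p a = i), ∑ c ∈ univ.filter (fun c => p c = j),
          R (f a) (f c) (f c) (f a))
        ≤ (k - 1 : ℝ) / (2 * k) * ‖H‖ ^ 2 + δbar := by
  intro f hf
  obtain ⟨fb, rfl⟩ := hf.exists_orthonormalBasis_coe_eq (by simp [hn])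
  set v : Fin k → E := fun i => ∑ a ∈ univ.filter (p · = i), h (fb a) (fb a)
  have hHv : H = ∑ i, v i := by
    rw [hH, b.sum_apply_self_eq h fb, Finset.sum_fiberwise]
  have hmixed_sq : 0 ≤ mixedSum p fun a c => ⟪h (fb a) (fb c), h (fb c) (fb a)⟫ :=
    mixedSum_nonneg p fun a c => hsym (fb c) (fb a) ▸ real_inner_self_nonneg
  have hambient :
      mixedSum p (fun a c => Rbar (J (fb a)) (J (fb c)) (J (fb c)) (J (fb a))) ≤ δbar :=
    hδbar _ (fb.orthonormal.comp_linearIsometry J)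
  have hmean := sum_inner_lt_le_mul_norm_sum_sq v
  simp only [Fintype.card_fin, ← hHv] at hmean
  change mixedSum p (fun a c => R (fb a) (fb c) (fb c) (fb a)) ≤ _
  simp_rw [hGauss, mixedSum_add_sub, mixedSum_inner]
  linarith

/-- General inequality `δ_mix(n_1,…,n_k) ≤ ((k−1)/(2k))‖H̄‖² + δ̄_mix(n_1,…,n_k)` at a
point of an isometric immersion `J : T_xM → T_xM̄` with (symmetric, normal-valued) second
fundamental form `h` and intrinsic curvature `R` given by the Gauss equation. The left
supremum is expressed by bounding `S_mix(V_1,…,V_k)` for every tuple of pairwise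
orthogonal subspaces `V_i ⊆ T_xM` of dimensions `n_i` (encoded by an adapted orthonormal
family `f` and the assignment `p`); `δ̄` is an upper bound of the corresponding ambient
mixed scalar curvatures. -/
theorem stmt_9 {T E : Type*} [NormedAddCommGroup T] [InnerProductSpace ℝ T]
    [NormedAddCommGroup E] [InnerProductSpace ℝ E] [FiniteDimensional ℝ T]
    (n k : ℕ) (hk : 2 ≤ k) (hn : Module.finrank ℝ T = n)
    (J : T →ₗᵢ[ℝ] E)
    (h : T →ₗ[ℝ] T →ₗ[ℝ] E)
    (hsym : ∀ X Y, h X Y = h Y X)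
    (hnor : ∀ X Y Z : T, ⟪h X Y, J Z⟫ = 0)
    (Rbar : E → E → E → E → ℝ)
    (R : T → T → T → T → ℝ)
    (hGauss : ∀ X Y Z W : T, R X Y Z W = Rbar (J X) (J Y) (J Z) (J W)
        + ⟪h X W, h Y Z⟫ - ⟪h X Z, h Y W⟫)
    (p : Fin n → Fin k)
    (b : OrthonormalBasis (Fin n) ℝ T)
    (H : E) (hH : H = ∑ a : Fin n, h (b a) (b a))
    (δbar : ℝ)
    (hδbar : ∀ g : Fin n → E, Orthonormal ℝ g →
      (∑ i : Fin k, ∑ j ∈ univ.filter (fun j => i < j),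
        ∑ a ∈ univ.filter (fun a => p a = i), ∑ c ∈ univ.filter (fun c => p c = j),
          Rbar (g a) (g c) (g c) (g a)) ≤ δbar) :
    ∀ f : Fin n → T, Orthonormal ℝ f →
      (∑ i : Fin k, ∑ j ∈ univ.filter (fun j => i < j),
        ∑ a ∈ univ.filter (fun a => p a = i), ∑ c ∈ univ.filter (fun c => p c = j),
          R (f a) (f c) (f c) (f a))
        ≤ (k - 1 : ℝ) / (2 * k) * ‖H‖ ^ 2 + δbar :=
  stmt_9_general n k hn J h hsym Rbar R hGauss p b H hH δbar hδbar
end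

section
/- Let f: (M,g; D_1,...,D_k) → (M̄,ḡ; D̄_1,...,D̄_k) be an adapted isometric immersion between Riemannian almost k-product manifolds, meaning f_*(D_i) ⊂ D̄_i along f(M) for each i. Then S_mix(D_1,...,D_k) ≤ ((k−1)/(2k))·‖H̄‖² + δ̂_mix(n_1,...,n_k), where δ̂_mix(n_1,...,n_k) is the supremum of S̄_mix(V_1,...,V_k) over subspaces V_i ⊂ D̄_i(x) with dim V_i = n_i, taken over all x ∈ M̄. -/
open Finset
open scoped RealInnerProductSpace

lemma sym_split {k : ℕ} (F : Fin k → Fin k → ℝ) (hF : ∀ i j, F i j = F j i) :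
    ∑ i : Fin k, ∑ j : Fin k, F i j
      = ∑ i : Fin k, F i i + 2 * ∑ i : Fin k, ∑ j ∈ univ.filter (fun j => i < j), F i j := by
  have hQ : ∑ i : Fin k, ∑ j ∈ univ.filter (fun j => j < i), F i j
      = ∑ i : Fin k, ∑ j ∈ univ.filter (fun j => i < j), F i j := by
    rw [Finset.sum_comm' (s' := fun j => univ.filter (fun i => j < i)) (t' := univ)]
    · exact Finset.sum_congr rfl (fun i _ => Finset.sum_congr rfl (fun j _ => hF j i))
    · intro i j; simp
  have hsplit : ∀ i : Fin k, ∑ j : Fin k, F i j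
      = F i i + ∑ j ∈ univ.filter (fun j => i < j), F i j
        + ∑ j ∈ univ.filter (fun j => j < i), F i j := by
    intro i
    rw [← Finset.sum_filter_add_sum_filter_not univ (fun j => i < j) (F i)]
    have h2 : univ.filter (fun j => ¬ i < j) = insert i (univ.filter (fun j => j < i)) := by
      ext j
      simp only [mem_filter, mem_univ, true_and, mem_insert, not_lt]
      constructor
      · intro hj; rcases lt_or_eq_of_le hj with h' | h'
        · exact Or.inr h'
        · exact Or.inl h'
      · rintro (rfl | hj); · exact le_refl _
        · exact le_of_lt hj
    rw [h2, Finset.sum_insert (by simp)]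
    ring
  rw [Finset.sum_congr rfl (fun i _ => hsplit i)]
  rw [Finset.sum_add_distrib, Finset.sum_add_distrib, hQ]
  ring

/-- Adapted immersions (pointwise form). Let the ambient tangent space `E` carry pairwise
orthogonal distributions `D̄_1, …, D̄_k`, let `e` be an adapted orthonormal tangent frame of
the immersed almost `k`-product manifold with `e a ∈ D̄ (p a)` (adaptedness), `h` the
(symmetric, normal-valued) second fundamental form, `K` the intrinsic sectional curvatures
via the Gauss equation, and `δ̂ = δ̂_mix(n_1,…,n_k)` an upper bound of ambient mixed scalar
curvatures over adapted orthonormal families lying in the distributions `D̄_i`. Then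
`S_mix(D_1,…,D_k) ≤ ((k−1)/(2k))‖H̄‖² + δ̂_mix(n_1,…,n_k)`. -/
theorem stmt_10 {E : Type*} [NormedAddCommGroup E] [InnerProductSpace ℝ E]
    (n k : ℕ) (hk : 2 ≤ k)
    (Dbar : Fin k → Submodule ℝ E)
    (hDorth : ∀ i j, i ≠ j → ∀ x ∈ Dbar i, ∀ y ∈ Dbar j, ⟪x, y⟫ = (0 : ℝ))
    (e : Fin n → E) (he : Orthonormal ℝ e)
    (p : Fin n → Fin k)
    (hadapted : ∀ a, e a ∈ Dbar (p a))
    (Rbar : E → E → E → E → ℝ)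
    (h : Fin n → Fin n → E)
    (hsym : ∀ a b, h a b = h b a)
    (hnor : ∀ a b c, ⟪h a b, e c⟫ = 0)
    (K : Fin n → Fin n → ℝ)
    (hK : ∀ a b, K a b = Rbar (e a) (e b) (e b) (e a) + ⟪h a a, h b b⟫ - ⟪h a b, h a b⟫)
    (Smix : ℝ)
    (hSmix : Smix = ∑ i : Fin k, ∑ j ∈ univ.filter (fun j => i < j),
        ∑ a ∈ univ.filter (fun a => p a = i), ∑ b ∈ univ.filter (fun b => p b = j), K a b)
    (δhat : ℝ)
    (hδhat : ∀ f : Fin n → E, Orthonormal ℝ f → (∀ a, f a ∈ Dbar (p a)) →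
      (∑ i : Fin k, ∑ j ∈ univ.filter (fun j => i < j),
        ∑ a ∈ univ.filter (fun a => p a = i), ∑ b ∈ univ.filter (fun b => p b = j),
          Rbar (f a) (f b) (f b) (f a)) ≤ δhat)
    (H : E) (hH : H = ∑ a : Fin n, h a a) :
    Smix ≤ (k - 1 : ℝ) / (2 * k) * ‖H‖ ^ 2 + δhat := by
  set T : Fin k → E := fun i => ∑ a ∈ univ.filter (fun a => p a = i), h a a with hT
  -- ambient part bound
  have hA : (∑ i : Fin k, ∑ j ∈ univ.filter (fun j => i < j),
        ∑ a ∈ univ.filter (fun a => p a = i), ∑ b ∈ univ.filter (fun b => p b = j),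
          Rbar (e a) (e b) (e b) (e a)) ≤ δhat := hδhat e he hadapted
  -- inner-product expansion
  have hTT : ∀ i j : Fin k,
      (∑ a ∈ univ.filter (fun a => p a = i), ∑ b ∈ univ.filter (fun b => p b = j),
        (⟪h a a, h b b⟫ : ℝ)) = ⟪T i, T j⟫ := by
    intro i j
    rw [hT]
    simp only [sum_inner, inner_sum]
    exact Finset.sum_comm
  -- Smix decomposition
  have hdec : Smix = (∑ i : Fin k, ∑ j ∈ univ.filter (fun j => i < j),
        ∑ a ∈ univ.filter (fun a => p a = i), ∑ b ∈ univ.filter (fun b => p b = j),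
          Rbar (e a) (e b) (e b) (e a))
      + (∑ i : Fin k, ∑ j ∈ univ.filter (fun j => i < j), (⟪T i, T j⟫ : ℝ))
      - (∑ i : Fin k, ∑ j ∈ univ.filter (fun j => i < j),
        ∑ a ∈ univ.filter (fun a => p a = i), ∑ b ∈ univ.filter (fun b => p b = j),
          (⟪h a b, h a b⟫ : ℝ)) := by
    rw [hSmix]
    rw [← Finset.sum_add_distrib, ← Finset.sum_sub_distrib]
    refine Finset.sum_congr rfl (fun i _ => ?_)
    rw [← Finset.sum_add_distrib, ← Finset.sum_sub_distrib]
    refine Finset.sum_congr rfl (fun j _ => ?_)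
    rw [← hTT i j]
    rw [← Finset.sum_add_distrib, ← Finset.sum_sub_distrib]
    refine Finset.sum_congr rfl (fun a _ => ?_)
    rw [← Finset.sum_add_distrib, ← Finset.sum_sub_distrib]
    exact Finset.sum_congr rfl (fun b _ => by rw [hK a b])
  have hNnonneg : 0 ≤ ∑ i : Fin k, ∑ j ∈ univ.filter (fun j => i < j),
        ∑ a ∈ univ.filter (fun a => p a = i), ∑ b ∈ univ.filter (fun b => p b = j),
          (⟪h a b, h a b⟫ : ℝ) := by
    refine Finset.sum_nonneg fun i _ => Finset.sum_nonneg fun j _ =>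
      Finset.sum_nonneg fun a _ => Finset.sum_nonneg fun b _ => real_inner_self_nonneg
  -- H = ∑ T i
  have hHT : H = ∑ i : Fin k, T i := by
    rw [hH, hT, Finset.sum_fiberwise]
  -- norm expansion
  have hnorm : ‖H‖ ^ 2 = ∑ i : Fin k, ‖T i‖ ^ 2
      + 2 * ∑ i : Fin k, ∑ j ∈ univ.filter (fun j => i < j), (⟪T i, T j⟫ : ℝ) := by
    have : (⟪H, H⟫ : ℝ) = ∑ i : Fin k, ∑ j : Fin k, (⟪T i, T j⟫ : ℝ) := by
      rw [hHT]; simp only [sum_inner, inner_sum]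
      exact Finset.sum_comm
    rw [← real_inner_self_eq_norm_sq, this,
      sym_split (fun i j => (⟪T i, T j⟫ : ℝ)) (fun i j => real_inner_comm _ _)]
    congr 1
    exact Finset.sum_congr rfl fun i _ => real_inner_self_eq_norm_sq _
  -- Cauchy-Schwarz
  have hCS : ‖H‖ ^ 2 ≤ (k : ℝ) * ∑ i : Fin k, ‖T i‖ ^ 2 := by
    have h1 : ‖H‖ ≤ ∑ i : Fin k, ‖T i‖ := by
      rw [hHT]; exact norm_sum_le _ _
    have h2 : (∑ i : Fin k, ‖T i‖) ^ 2 ≤ (k : ℝ) * ∑ i : Fin k, ‖T i‖ ^ 2 := by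
      have := sq_sum_le_card_mul_sum_sq (s := (univ : Finset (Fin k)))
        (f := fun i => ‖T i‖)
      simpa using this
    calc ‖H‖ ^ 2 ≤ (∑ i : Fin k, ‖T i‖) ^ 2 := by
          apply pow_le_pow_left₀ (norm_nonneg _) h1
      _ ≤ _ := h2
  have hkpos : (0 : ℝ) < k := by positivity
  have hQle : ∑ i : Fin k, ∑ j ∈ univ.filter (fun j => i < j), (⟪T i, T j⟫ : ℝ)
      ≤ (k - 1 : ℝ) / (2 * k) * ‖H‖ ^ 2 := by
    rw [div_mul_eq_mul_div, le_div_iff₀ (by positivity)]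
    nlinarith [hnorm, hCS]
  linarith [hdec, hA, hNnonneg, hQle]
end

section
/- Let F_1 ×_u M_2 be a multiply twisted product with M_2 = F_2 × ... × F_k and twisting functions u_i: F_1 × F_i → (0,∞), with induced distributions D_1 (tangent to F_1) and D_i (tangent to F_i, i ≥ 2). If f is an isometric immersion of F_1 ×_u M_2 into a Riemannian manifold (M̄,ḡ), then Σ_{i=2}^k n_i·(Δ^{(1)} u_i)/u_i ≤ ((k−1)/(2k))·‖H̄‖² + δ̄_mix(n_1,...,n_k), where n_i = dim F_i, Δ^{(1)} is the Laplacian along the leaves F_1 × {y}, and H̄ is the mean curvature vector of f. If f maps into a real space form of constant curvature c, the right side becomes ((k−1)/(2k))·‖H̄‖² + c·Σ_{i<j} n_i n_j. -/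
open Finset
open scoped RealInnerProductSpace

private lemma tri_split {k : ℕ} (f : Fin k → Fin k → ℝ) (hf : ∀ i j, f i j = f j i) :
    ∑ i : Fin k, ∑ j : Fin k, f i j
      = (∑ i : Fin k, f i i) + 2 * ∑ i : Fin k, ∑ j ∈ univ.filter (fun j => i < j), f i j := by
  have h1 : ∀ i : Fin k, ∑ j : Fin k, f i j
      = f i i + (∑ j ∈ univ.filter (fun j => i < j), f i j)
        + ∑ j ∈ univ.filter (fun j => j < i), f i j := by
    intro i
    rw [← Finset.sum_filter_add_sum_filter_not univ (fun j => i < j) (f i)]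
    have : univ.filter (fun j => ¬ i < j) = insert i (univ.filter (fun j => j < i)) := by
      ext j; simp [Finset.mem_insert]; omega
    rw [this, Finset.sum_insert (by simp)]
    ring
  have h2 : ∑ i : Fin k, ∑ j ∈ univ.filter (fun j => j < i), f i j
      = ∑ i : Fin k, ∑ j ∈ univ.filter (fun j => i < j), f i j := by
    calc ∑ i : Fin k, ∑ j ∈ univ.filter (fun j => j < i), f i j
        = ∑ i : Fin k, ∑ j : Fin k, if j < i then f i j else 0 := by
          simp [Finset.sum_filter]
      _ = ∑ j : Fin k, ∑ i : Fin k, if j < i then f i j else 0 := Finset.sum_comm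
      _ = ∑ j : Fin k, ∑ i ∈ univ.filter (fun i => j < i), f i j := by
          simp [Finset.sum_filter]
      _ = ∑ i : Fin k, ∑ j ∈ univ.filter (fun j => i < j), f i j := by
          refine Finset.sum_congr rfl fun j _ => Finset.sum_congr rfl fun i _ => hf i j
  simp_rw [h1, Finset.sum_add_distrib, h2]
  ring

private lemma chen_ineq {E : Type*} [NormedAddCommGroup E] [InnerProductSpace ℝ E]
    {k : ℕ} (hk : 1 ≤ k) (v : Fin k → E) :
    ∑ i : Fin k, ∑ j ∈ univ.filter (fun j => i < j), (⟪v i, v j⟫ : ℝ)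
      ≤ (k - 1 : ℝ) / (2 * k) * ‖∑ i : Fin k, v i‖ ^ 2 := by
  set N : ℝ := ‖∑ i : Fin k, v i‖ ^ 2 with hN
  set S : ℝ := ∑ i : Fin k, ‖v i‖ ^ 2 with hS
  set T : ℝ := ∑ i : Fin k, ∑ j ∈ univ.filter (fun j => i < j), (⟪v i, v j⟫ : ℝ) with hT
  have hid : N = S + 2 * T := by
    have : (⟪∑ i : Fin k, v i, ∑ j : Fin k, v j⟫ : ℝ) = ∑ i : Fin k, ∑ j : Fin k, ⟪v i, v j⟫ := by
      rw [sum_inner]; exact Finset.sum_congr rfl fun i _ => by rw [inner_sum]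
    have hid' := tri_split (fun i j => (⟪v i, v j⟫ : ℝ)) (fun i j => real_inner_comm _ _)
    rw [hN, ← real_inner_self_eq_norm_sq, this, hid']
    simp [hS, hT, real_inner_self_eq_norm_sq]
  have hCS : N ≤ (k : ℝ) * S := by
    have h1 : ‖∑ i : Fin k, v i‖ ≤ ∑ i : Fin k, ‖v i‖ := norm_sum_le _ _
    have h2 : (∑ i : Fin k, ‖v i‖) ^ 2 ≤ (k : ℝ) * ∑ i : Fin k, ‖v i‖ ^ 2 := by
      have := sq_sum_le_card_mul_sum_sq (s := (univ : Finset (Fin k))) (f := fun i => ‖v i‖)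
      simpa using this
    calc N ≤ (∑ i : Fin k, ‖v i‖) ^ 2 := by
          rw [hN]; exact pow_le_pow_left₀ (norm_nonneg _) h1 2
      _ ≤ (k : ℝ) * S := h2
  have hkpos : (0 : ℝ) < k := by exact_mod_cast hk
  rw [div_mul_eq_mul_div, le_div_iff₀ (by positivity)]
  nlinarith [hid, hCS]

/-- Isometric immersion of a multiply twisted product `F_1 ×_u M_2` (pointwise form).
The factor `F_i` corresponds to the index `i : Fin k` (with `i = 0` the base `F_1`), the
adapted orthonormal tangent frame `e` is assigned to the factors by `p` (so
`n_i = dim F_i` is the cardinality of the fibre of `p`), `h` is the (symmetric,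
normal-valued) second fundamental form, `K` the intrinsic sectional curvatures via the
Gauss equation, and `L i = (Δ¹ u_i)/u_i` the leafwise Laplacian quotients, which for a
multiply twisted product satisfy `S_mix(D_1,…,D_k) = ∑_{i≥2} n_i (Δ¹ u_i)/u_i`. Then
`∑_{i≥2} n_i (Δ¹u_i)/u_i ≤ ((k−1)/(2k))‖H̄‖² + δ̄_mix(n_1,…,n_k)`, and if the ambient
space is a real space form of curvature `c`, the bound becomes
`((k−1)/(2k))‖H̄‖² + c ∑_{i<j} n_i n_j`. -/
theorem stmt_15 {E : Type*} [NormedAddCommGroup E] [InnerProductSpace ℝ E]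
    (n k : ℕ) (hk : 2 ≤ k)
    (e : Fin n → E) (he : Orthonormal ℝ e)
    (p : Fin n → Fin k) (hp : Function.Surjective p)
    (nd : Fin k → ℕ) (hnd : ∀ i, nd i = (univ.filter (fun a => p a = i)).card)
    (Rbar : E → E → E → E → ℝ)
    (h : Fin n → Fin n → E)
    (hsym : ∀ a b, h a b = h b a)
    (hnor : ∀ a b c, ⟪h a b, e c⟫ = 0)
    (K : Fin n → Fin n → ℝ)
    (hK : ∀ a b, K a b = Rbar (e a) (e b) (e b) (e a) + ⟪h a a, h b b⟫ - ⟪h a b, h a b⟫)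
    (Smix : ℝ)
    (hSmix : Smix = ∑ i : Fin k, ∑ j ∈ univ.filter (fun j => i < j),
        ∑ a ∈ univ.filter (fun a => p a = i), ∑ b ∈ univ.filter (fun b => p b = j), K a b)
    (L : Fin k → ℝ)  -- the values `(Δ¹ u_i)/u_i` at the point, `i ≥ 2`
    (hTwist : Smix = ∑ i ∈ univ.filter (fun i => i ≠ (⟨0, by omega⟩ : Fin k)), (nd i : ℝ) * L i)
    (δ : ℝ)
    (hδ : ∀ f : Fin n → E, Orthonormal ℝ f →
      (∑ i : Fin k, ∑ j ∈ univ.filter (fun j => i < j),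
        ∑ a ∈ univ.filter (fun a => p a = i), ∑ b ∈ univ.filter (fun b => p b = j),
          Rbar (f a) (f b) (f b) (f a)) ≤ δ)
    (H : E) (hH : H = ∑ a : Fin n, h a a) :
    (∑ i ∈ univ.filter (fun i => i ≠ (⟨0, by omega⟩ : Fin k)), (nd i : ℝ) * L i)
      ≤ (k - 1 : ℝ) / (2 * k) * ‖H‖ ^ 2 + δ ∧
    (∀ c : ℝ, (∀ X Y Z W : E, Rbar X Y Z W
        = c * ((⟪X, W⟫ : ℝ) * ⟪Y, Z⟫ - (⟪X, Z⟫ : ℝ) * ⟪Y, W⟫)) →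
      (∑ i ∈ univ.filter (fun i => i ≠ (⟨0, by omega⟩ : Fin k)), (nd i : ℝ) * L i)
        ≤ (k - 1 : ℝ) / (2 * k) * ‖H‖ ^ 2
          + c * ∑ i : Fin k, ∑ j ∈ univ.filter (fun j => i < j), (nd i : ℝ) * (nd j : ℝ)) := by
  classical
  set Rsum : ℝ := ∑ i : Fin k, ∑ j ∈ univ.filter (fun j => i < j),
      ∑ a ∈ univ.filter (fun a => p a = i), ∑ b ∈ univ.filter (fun b => p b = j),
        Rbar (e a) (e b) (e b) (e a) with hRsum
  set Hv : Fin k → E := fun i => ∑ a ∈ univ.filter (fun a => p a = i), h a a with hHv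
  have hHsum : H = ∑ i : Fin k, Hv i := by
    rw [hH, hHv]
    rw [Finset.sum_fiberwise_eq_sum_filter univ univ p (fun a => h a a)]
    simp
  -- inner-product term
  have hIP : ∀ i j : Fin k,
      (∑ a ∈ univ.filter (fun a => p a = i), ∑ b ∈ univ.filter (fun b => p b = j),
        (⟪h a a, h b b⟫ : ℝ)) = ⟪Hv i, Hv j⟫ := by
    intro i j
    rw [hHv, sum_inner]
    exact Finset.sum_congr rfl fun a _ => by rw [inner_sum]
  -- main splitting of Smix
  have hsplit : Smix ≤ Rsum + ∑ i : Fin k, ∑ j ∈ univ.filter (fun j => i < j),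
      (⟪Hv i, Hv j⟫ : ℝ) := by
    rw [hSmix]
    have : ∀ i j : Fin k,
        (∑ a ∈ univ.filter (fun a => p a = i), ∑ b ∈ univ.filter (fun b => p b = j), K a b)
        ≤ (∑ a ∈ univ.filter (fun a => p a = i), ∑ b ∈ univ.filter (fun b => p b = j),
            Rbar (e a) (e b) (e b) (e a)) + ⟪Hv i, Hv j⟫ := by
      intro i j
      rw [← hIP i j, ← Finset.sum_add_distrib]
      simp_rw [← Finset.sum_add_distrib]
      refine Finset.sum_le_sum fun a _ => Finset.sum_le_sum fun b _ => ?_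
      rw [hK a b]
      have := real_inner_self_nonneg (x := h a b)
      linarith
    calc (∑ i : Fin k, ∑ j ∈ univ.filter (fun j => i < j),
        ∑ a ∈ univ.filter (fun a => p a = i), ∑ b ∈ univ.filter (fun b => p b = j), K a b)
        ≤ ∑ i : Fin k, ∑ j ∈ univ.filter (fun j => i < j),
            ((∑ a ∈ univ.filter (fun a => p a = i), ∑ b ∈ univ.filter (fun b => p b = j),
              Rbar (e a) (e b) (e b) (e a)) + ⟪Hv i, Hv j⟫) := by
          exact Finset.sum_le_sum fun i _ => Finset.sum_le_sum fun j _ => this i j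
      _ = Rsum + ∑ i : Fin k, ∑ j ∈ univ.filter (fun j => i < j), (⟪Hv i, Hv j⟫ : ℝ) := by
          rw [hRsum]; simp [Finset.sum_add_distrib]
  have hchen : ∑ i : Fin k, ∑ j ∈ univ.filter (fun j => i < j), (⟪Hv i, Hv j⟫ : ℝ)
      ≤ (k - 1 : ℝ) / (2 * k) * ‖H‖ ^ 2 := by
    have := chen_ineq (E := E) (k := k) (by omega) Hv
    rwa [← hHsum] at this
  have key : ∀ δ' : ℝ, Rsum ≤ δ' →
      (∑ i ∈ univ.filter (fun i => i ≠ (⟨0, by omega⟩ : Fin k)), (nd i : ℝ) * L i)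
        ≤ (k - 1 : ℝ) / (2 * k) * ‖H‖ ^ 2 + δ' := by
    intro δ' hδ'
    rw [← hTwist]
    calc Smix ≤ Rsum + ∑ i : Fin k, ∑ j ∈ univ.filter (fun j => i < j),
        (⟪Hv i, Hv j⟫ : ℝ) := hsplit
      _ ≤ (k - 1 : ℝ) / (2 * k) * ‖H‖ ^ 2 + δ' := by linarith
  refine ⟨key δ (hδ e he), fun c hc => ?_⟩
  apply key
  have hortho := orthonormal_iff_ite.mp he
  have hRval : Rsum = c * ∑ i : Fin k, ∑ j ∈ univ.filter (fun j => i < j),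
      (nd i : ℝ) * (nd j : ℝ) := by
    rw [hRsum, Finset.mul_sum]
    refine Finset.sum_congr rfl fun i _ => ?_
    rw [Finset.mul_sum]
    refine Finset.sum_congr rfl fun j hj => ?_
    have hij : i ≠ j := by
      simp only [Finset.mem_filter] at hj; exact ne_of_lt hj.2
    have : ∀ a ∈ univ.filter (fun a => p a = i), ∀ b ∈ univ.filter (fun b => p b = j),
        Rbar (e a) (e b) (e b) (e a) = c := by
      intro a ha b hb
      simp only [Finset.mem_filter] at ha hb
      have hab : a ≠ b := fun hab => hij (by rw [← ha.2, hab, hb.2])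
      rw [hc, hortho a a, hortho b b, hortho a b]
      simp [hab]
    calc (∑ a ∈ univ.filter (fun a => p a = i), ∑ b ∈ univ.filter (fun b => p b = j),
        Rbar (e a) (e b) (e b) (e a))
        = ∑ a ∈ univ.filter (fun a => p a = i), ∑ _b ∈ univ.filter (fun b => p b = j), c :=
          Finset.sum_congr rfl fun a ha => Finset.sum_congr rfl fun b hb => this a ha b hb
      _ = c * ((nd i : ℝ) * (nd j : ℝ)) := by
          rw [hnd i, hnd j]; simp [Finset.sum_const]; ring
  rw [hRval]
end
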